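/- Let h ≥ 1, let X ⊆ B^h be nonempty, let G = Q_h(X), and let u ∈ V(G) have degree h in G. Let X' = {x ∈ \widehat X : u ≤ x}. Then every minimal vertex of G belongs to ∩_{x∈X'} I_G(0^h, x); that is, every minimal vertex v of G satisfies v ≤ x for all x ∈ X'. -/

import Mathlib

open SimpleGraph

/-- The hypercube `Q_h` on binary words of length `h`: two words are adjacent
iff their Hamming distance is `1`. -/
def Qcube (h : ℕ) : SimpleGraph (Fin h → Bool) where
  Adj u v := hammingDist u v = 1
  symm := ⟨fun u v (huv : hammingDist u v = 1) => show hammingDist v u = 1 by rwa [hammingDist_comm]⟩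
  loopless := ⟨fun u (hu : hammingDist u u = 1) => by rw [hammingDist_self] at hu; exact absurd hu (by norm_num)⟩

/-- Vertex set of the daisy cube `Q_h(X)`: all words below some element of `X`. -/
def daisyVerts {h : ℕ} (X : Set (Fin h → Bool)) : Set (Fin h → Bool) :=
  {v | ∃ x ∈ X, v ≤ x}

/-- The daisy cube `Q_h(X)`, the subgraph of `Q_h` induced by `daisyVerts X`. -/
def daisyGraph {h : ℕ} (X : Set (Fin h → Bool)) : SimpleGraph (daisyVerts X) :=
  SimpleGraph.induce (daisyVerts X) (Qcube h)

/-- `\widehat X`: the set of maximal elements of the poset `(X, ≤)`. -/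
def maxSet {h : ℕ} (X : Set (Fin h → Bool)) : Set (Fin h → Bool) :=
  {x ∈ X | ∀ y ∈ X, x ≤ y → x = y}

/-- The all-zeros word `0^h`. -/
def zeroW (h : ℕ) : Fin h → Bool := fun _ => false

/-- Bitwise XOR of words. -/
def xorW {h : ℕ} (u v : Fin h → Bool) : Fin h → Bool := fun i => xor (u i) (v i)

/-- Bitwise AND of words. -/
def andW {h : ℕ} (u v : Fin h → Bool) : Fin h → Bool := fun i => u i && v i

/-- The weight `w(u)`: the number of ones of a word. -/
def weightW {h : ℕ} (u : Fin h → Bool) : ℕ :=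
  (Finset.univ.filter fun i => u i = true).card

/-- The interval `I_G(u,v)`: vertices lying on shortest `u,v`-paths. -/
def gInterval {V : Type*} (G : SimpleGraph V) (u v : V) : Set V :=
  {w | G.dist u w + G.dist w v = G.dist u v}

/-- `N^u(v)`: neighbors of `v` that are closer to `u` than `v` is. -/
def lowerNbrs {V : Type*} (G : SimpleGraph V) (u v : V) : Set V :=
  {z | G.Adj v z ∧ G.dist u z + 1 = G.dist u v}

/-- `α` is an isometric embedding of `G` into `Q_h`. -/
def IsIsomEmb {V : Type*} (G : SimpleGraph V) {h : ℕ} (α : V → Fin h → Bool) : Prop :=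
  ∀ a b, hammingDist (α a) (α b) = G.dist a b

/-- `α` is a proper embedding of `G` into `Q_h`: an isometric embedding such that
`G` is isomorphic to the daisy cube generated by the image of `α`. -/
def IsProperEmb {V : Type*} (G : SimpleGraph V) {h : ℕ} (α : V → Fin h → Bool) : Prop :=
  IsIsomEmb G α ∧ Nonempty (G ≃g daisyGraph (Set.range α))

/-- `v` is a minimal vertex of `G`: some proper embedding sends `v` to `0^h`. -/
def IsMinVertex {V : Type*} (G : SimpleGraph V) (h : ℕ) (v : V) : Prop :=
  ∃ α : V → Fin h → Bool, IsProperEmb G α ∧ α v = zeroW h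

/-- The labeling conditions of Proposition `cubes`/Lemma `partial`: `α v = 0^h`,
the neighbors of `v` get pairwise distinct weight-one labels, and every other
vertex gets the bitwise OR of the labels of its down-neighbors. -/
def goodLabeling {V : Type*} (G : SimpleGraph V) {h : ℕ} (v : V)
    (α : V → Fin h → Bool) : Prop :=
  α v = zeroW h ∧
  Set.InjOn α (G.neighborSet v) ∧
  (∀ z ∈ G.neighborSet v, weightW (α z) = 1) ∧
  (∀ u ∉ insert v (G.neighborSet v),
    ∀ i, α u i = true ↔ ∃ z ∈ lowerNbrs G v u, α z i = true)


namespace DaisyAux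

variable {h : ℕ} {X : Set (Fin h → Bool)}

lemma hamming_one {a b : Fin h → Bool} (hab : hammingDist a b = 1) :
    ∃ s, a s ≠ b s ∧ ∀ t, t ≠ s → a t = b t := by
  have : ({i | a i ≠ b i} : Finset (Fin h)).card = 1 := hab
  obtain ⟨s, hs⟩ := Finset.card_eq_one.mp this
  refine ⟨s, ?_, ?_⟩
  · have : s ∈ ({i | a i ≠ b i} : Finset (Fin h)) := hs ▸ Finset.mem_singleton_self s
    simpa using this
  · intro t hts
    by_contra hne
    have : t ∈ ({i | a i ≠ b i} : Finset (Fin h)) := by simpa using hne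
    rw [hs] at this
    exact hts (Finset.mem_singleton.mp this)

lemma ham_update_of_eq {a b : Fin h → Bool} {i : Fin h} {c : Bool}
    (h1 : a i = b i) (h2 : b i ≠ c) :
    hammingDist a (Function.update b i c) = hammingDist a b + 1 := by
  show ({j | a j ≠ Function.update b i c j} : Finset (Fin h)).card = _
  have hset : ({j | a j ≠ Function.update b i c j} : Finset (Fin h))
      = insert i ({j | a j ≠ b j} : Finset (Fin h)) := by
    ext j
    by_cases hj : j = i
    · subst hj
      have : a j ≠ c := h1 ▸ h2
      simp [this]
    · simp [Function.update_of_ne hj, hj]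
  rw [hset, Finset.card_insert_of_notMem (by simp [h1])]
  rfl

lemma ham_update_of_ne {a b : Fin h → Bool} {i : Fin h} {c : Bool}
    (h1 : a i ≠ b i) (h2 : b i ≠ c) :
    hammingDist a (Function.update b i c) + 1 = hammingDist a b := by
  have hac : a i = c := by revert h1 h2; cases a i <;> cases b i <;> cases c <;> simp
  show ({j | a j ≠ Function.update b i c j} : Finset (Fin h)).card + 1 = _
  have hset : ({j | a j ≠ Function.update b i c j} : Finset (Fin h))
      = ({j | a j ≠ b j} : Finset (Fin h)).erase i := by
    ext j
    by_cases hj : j = i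
    · subst hj; simp [hac]
    · simp [Function.update_of_ne hj, hj]
  rw [hset, Finset.card_erase_add_one (by simpa using h1)]
  rfl

lemma ham_update_self {a : Fin h → Bool} {i : Fin h} {c : Bool} (hc : a i ≠ c) :
    hammingDist a (Function.update a i c) = 1 := by
  rw [ham_update_of_eq rfl hc, hammingDist_self]

lemma daisy_adj {a b : daisyVerts X} :
    (daisyGraph X).Adj a b ↔ hammingDist (a : Fin h → Bool) (b : Fin h → Bool) = 1 :=
  Iff.rfl

lemma mem_daisy_of_le {a w : Fin h → Bool} (ha : a ∈ daisyVerts X) (hw : w ≤ a) :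
    w ∈ daisyVerts X := by
  obtain ⟨x, hx, hax⟩ := ha
  exact ⟨x, hx, le_trans hw hax⟩

lemma ham_le_walk {a b : daisyVerts X} (p : (daisyGraph X).Walk a b) :
    hammingDist (a : Fin h → Bool) (b : Fin h → Bool) ≤ p.length := by
  induction p with
  | nil => simp
  | @cons a c b hadj p ih =>
    have h1 : hammingDist (a : Fin h → Bool) (c : Fin h → Bool) = 1 := hadj
    calc hammingDist (a : Fin h → Bool) (b : Fin h → Bool)
        ≤ hammingDist (a : Fin h → Bool) (c : Fin h → Bool)
          + hammingDist (c : Fin h → Bool) (b : Fin h → Bool) := hammingDist_triangle _ _ _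
      _ ≤ 1 + p.length := by rw [h1]; omega
      _ = (SimpleGraph.Walk.cons hadj p).length := by simp [SimpleGraph.Walk.length_cons]; omega

lemma exists_walk : ∀ (n : ℕ) (a b : daisyVerts X),
    hammingDist (a : Fin h → Bool) (b : Fin h → Bool) = n →
    ∃ p : (daisyGraph X).Walk a b, p.length = n := by
  intro n
  induction n with
  | zero =>
    intro a b hab
    have : (a : Fin h → Bool) = b := hammingDist_eq_zero.mp hab
    have : a = b := Subtype.ext this
    subst this
    exact ⟨SimpleGraph.Walk.nil, rfl⟩
  | succ n ih =>
    intro a b hab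
    -- choose a coordinate to step on
    have hne : (a : Fin h → Bool) ≠ b := by
      intro hh
      rw [hh, hammingDist_self] at hab
      omega
    have hstep : ∃ i : Fin h, (a : Fin h → Bool) i ≠ (b : Fin h → Bool) i ∧
        Function.update (a : Fin h → Bool) i ((b : Fin h → Bool) i) ∈ daisyVerts X := by
      by_cases hc : ∃ i, (a : Fin h → Bool) i = true ∧ (b : Fin h → Bool) i = false
      · obtain ⟨i, hai, hbi⟩ := hc
        refine ⟨i, by simp [hai, hbi], ?_⟩
        refine mem_daisy_of_le a.2 ?_
        intro j
        by_cases hj : j = i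
        · subst hj; simp [hbi]
        · rw [Function.update_of_ne hj]
      · have hle : (a : Fin h → Bool) ≤ b := by
          intro j
          by_cases haj : (a : Fin h → Bool) j = true
          · have hbj : (b : Fin h → Bool) j = true := by
              by_contra hbj
              exact hc ⟨j, haj, by simpa using hbj⟩
            simp [haj, hbj]
          · simp [Bool.eq_false_iff.mpr haj]
        obtain ⟨i, hi⟩ : ∃ i, (a : Fin h → Bool) i ≠ (b : Fin h → Bool) i := by
          by_contra hcon
          push_neg at hcon
          exact hne (funext hcon)
        refine ⟨i, hi, ?_⟩
        refine mem_daisy_of_le b.2 ?_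
        intro j
        by_cases hj : j = i
        · subst hj; simp
        · rw [Function.update_of_ne hj]; exact hle j
    obtain ⟨i, hi, hmem⟩ := hstep
    set a' : daisyVerts X := ⟨Function.update (a : Fin h → Bool) i ((b : Fin h → Bool) i), hmem⟩
    have hadj : (daisyGraph X).Adj a a' := ham_update_self hi
    have hd : hammingDist (a' : Fin h → Bool) (b : Fin h → Bool) = n := by
      have := ham_update_of_ne (a := (b : Fin h → Bool)) (b := (a : Fin h → Bool))
        (i := i) (c := (b : Fin h → Bool) i) (Ne.symm hi) hi
      have ha' : (a' : Fin h → Bool) = Function.update (a : Fin h → Bool) i ((b : Fin h → Bool) i) := rfl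
      rw [ha']
      rw [hammingDist_comm] at hab
      rw [hammingDist_comm]
      omega
    obtain ⟨p, hp⟩ := ih a' b hd
    exact ⟨SimpleGraph.Walk.cons hadj p, by simp [SimpleGraph.Walk.length_cons, hp]⟩

lemma daisy_dist (a b : daisyVerts X) :
    (daisyGraph X).dist a b = hammingDist (a : Fin h → Bool) (b : Fin h → Bool) := by
  obtain ⟨p, hp⟩ := exists_walk _ a b rfl
  refine le_antisymm (le_trans (SimpleGraph.dist_le p) hp.le) ?_
  obtain ⟨q, hq⟩ := (p.reachable).exists_walk_length_eq_dist
  rw [← hq]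
  exact ham_le_walk q

lemma key (α : daisyVerts X → (Fin h → Bool))
    (hα : ∀ a b : daisyVerts X, hammingDist (α a) (α b)
      = hammingDist (a : Fin h → Bool) (b : Fin h → Bool))
    (u n : daisyVerts X) (j s : Fin h)
    (hn : (n : Fin h → Bool)
      = Function.update (u : Fin h → Bool) j (!((u : Fin h → Bool) j)))
    (hs : α n s ≠ α u s) (hs' : ∀ t, t ≠ s → α n t = α u t)
    (a : daisyVerts X) :
    (α a s ≠ α u s) ↔ ((a : Fin h → Bool) j ≠ (u : Fin h → Bool) j) := by
  have hb : (u : Fin h → Bool) j ≠ !((u : Fin h → Bool) j) := by simp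
  have hcs : α u s ≠ α n s := Ne.symm hs
  have hαn : α n = Function.update (α u) s (α n s) := by
    funext t
    by_cases ht : t = s
    · subst ht; simp
    · rw [Function.update_of_ne ht]; exact hs' t ht
  have hA : hammingDist (α a) (Function.update (α u) s (α n s))
      = hammingDist (a : Fin h → Bool)
          (Function.update (u : Fin h → Bool) j (!((u : Fin h → Bool) j))) := by
    rw [← hαn, ← hn]; exact hα a n
  have hAu := hα a u
  constructor
  · intro h1
    by_contra h2
    have e1 := ham_update_of_ne (a := α a) h1 hcs
    have e2 := ham_update_of_eq (a := (a : Fin h → Bool)) h2 hb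
    omega
  · intro h1
    by_contra h2
    have e1 := ham_update_of_eq (a := α a) h2 hcs
    have e2 := ham_update_of_ne (a := (a : Fin h → Bool)) h1 hb
    omega

lemma ham_zero (a : Fin h → Bool) :
    hammingDist (zeroW h) a = ({i | a i = true} : Finset (Fin h)).card := by
  show ({i | zeroW h i ≠ a i} : Finset (Fin h)).card = _
  congr 1
  ext i
  cases ha : a i <;> simp [zeroW, ha]

lemma ham_add_of_le {a x : Fin h → Bool} (hax : a ≤ x) :
    hammingDist (zeroW h) a + hammingDist a x = hammingDist (zeroW h) x := by
  rw [ham_zero, ham_zero]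
  show _ + ({i | a i ≠ x i} : Finset (Fin h)).card = _
  have himp : ∀ i, a i = true → x i = true := fun i hi => by
    have := hax i
    rw [hi] at this
    exact Bool.le_iff_imp.mp this rfl
  rw [← Finset.card_union_of_disjoint (s := ({i | a i = true} : Finset (Fin h)))
    (t := ({i | a i ≠ x i} : Finset (Fin h))) ?_]
  · congr 1
    ext i
    by_cases hai : a i = true
    · simp [hai, himp i hai]
    · have hai' : a i = false := Bool.eq_false_iff.mpr hai
      cases hxi : x i <;> simp [hai', hxi]
  · rw [Finset.disjoint_left]
    intro i hi1 hi2
    simp only [Finset.mem_filter, Finset.mem_univ, true_and] at hi1 hi2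
    exact hi2 (hi1.trans (himp i hi1).symm)

end DaisyAux

/-- If `u` is a vertex of degree `h` in the daisy cube `G = Q_h(X)` and
`X' = {x ∈ \widehat X : u ≤ x}`, then every minimal vertex of `G` belongs to
`∩_{x ∈ X'} I_G(0^h, x)`; that is, every minimal vertex `v` satisfies `v ≤ x`
for all `x ∈ X'`. -/
theorem stmt_3 (h : ℕ) (hh : 1 ≤ h) (X : Set (Fin h → Bool)) (hX : X.Nonempty)
    (z : daisyVerts X) (hz : (z : Fin h → Bool) = zeroW h)
    (u : daisyVerts X) (hu : ((daisyGraph X).neighborSet u).ncard = h)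
    (v : daisyVerts X) (hv : IsMinVertex (daisyGraph X) h v) :
    (∀ x : daisyVerts X, (x : Fin h → Bool) ∈ maxSet X →
      (u : Fin h → Bool) ≤ (x : Fin h → Bool) → v ∈ gInterval (daisyGraph X) z x) ∧
    (∀ x ∈ maxSet X, (u : Fin h → Bool) ≤ x → (v : Fin h → Bool) ≤ x) := by
  classical
  obtain ⟨α, ⟨hiso, ⟨e⟩⟩, hv0⟩ := hv
  have hα : ∀ a b : daisyVerts X, hammingDist (α a) (α b)
      = hammingDist (a : Fin h → Bool) (b : Fin h → Bool) :=
    fun a b => (hiso a b).trans (DaisyAux.daisy_dist a b)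
  have hinj : Function.Injective α := by
    intro a b hab
    have h0 : hammingDist (a : Fin h → Bool) (b : Fin h → Bool) = 0 := by
      rw [← hα a b, hab, hammingDist_self]
    exact Subtype.ext (hammingDist_eq_zero.mp h0)
  -- the range of α is downward closed
  have hrangeclosed : Set.range α = daisyVerts (Set.range α) := by
    have hsub : Set.range α ⊆ daisyVerts (Set.range α) := fun y hy => ⟨y, hy, le_refl y⟩
    have hcard : (daisyVerts (Set.range α)).ncard ≤ (Set.range α).ncard := by
      have c1 : Nat.card (Set.range α) = Nat.card (daisyVerts X) :=
        Nat.card_range_of_injective hinj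
      have c2 : Nat.card (daisyVerts X) = Nat.card (daisyVerts (Set.range α)) :=
        Nat.card_congr e.toEquiv
      rw [← Nat.card_coe_set_eq, ← Nat.card_coe_set_eq, c1, ← c2]
    exact Set.eq_of_subset_of_ncard_le hsub hcard (Set.toFinite _)
  have hclosed : ∀ (a : daisyVerts X) (s : Fin h),
      ∃ b : daisyVerts X, α b = Function.update (α a) s false := by
    intro a s
    have hmem : Function.update (α a) s false ∈ daisyVerts (Set.range α) := by
      refine ⟨α a, ⟨a, rfl⟩, ?_⟩
      intro t
      by_cases ht : t = s
      · subst ht; simp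
      · rw [Function.update_of_ne ht]
    rw [← hrangeclosed] at hmem
    obtain ⟨b, hb⟩ := hmem
    exact ⟨b, hb⟩
  -- degree h: all flips of u are vertices
  have hdeg : ∀ j : Fin h,
      Function.update (u : Fin h → Bool) j (!((u : Fin h → Bool) j)) ∈ daisyVerts X := by
    have hnbr : ∀ a : ((daisyGraph X).neighborSet u), ∃ j : Fin h,
        ((a : daisyVerts X) : Fin h → Bool)
          = Function.update (u : Fin h → Bool) j (!((u : Fin h → Bool) j)) := by
      intro a
      have hadj : (daisyGraph X).Adj u a := a.2
      have h1 : hammingDist (u : Fin h → Bool) ((a : daisyVerts X) : Fin h → Bool) = 1 := hadj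
      obtain ⟨s, hs, hs'⟩ := DaisyAux.hamming_one h1
      refine ⟨s, funext fun t => ?_⟩
      by_cases ht : t = s
      · subst ht
        rw [Function.update_self]
        revert hs
        cases ((a : daisyVerts X) : Fin h → Bool) t <;>
          cases (u : Fin h → Bool) t <;> simp
      · rw [Function.update_of_ne ht]
        exact (hs' t ht).symm
    choose f hf using hnbr
    have finj : Function.Injective f := by
      intro a b hab
      have h2 : ((a : daisyVerts X) : Fin h → Bool) = ((b : daisyVerts X) : Fin h → Bool) := by
        rw [hf a, hf b, hab]
      exact Subtype.ext (Subtype.ext h2)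
    have hcard : Nat.card ((daisyGraph X).neighborSet u) = Nat.card (Fin h) := by
      rw [Nat.card_coe_set_eq, hu, Nat.card_eq_fintype_card, Fintype.card_fin]
    have hbij : Function.Bijective f :=
      (Nat.bijective_iff_injective_and_card f).mpr ⟨finj, hcard⟩
    intro j
    obtain ⟨a, ha⟩ := hbij.2 j
    have h3 := hf a
    rw [ha] at h3
    rw [← h3]
    exact (a : daisyVerts X).2
  set n : Fin h → daisyVerts X :=
    fun j => ⟨Function.update (u : Fin h → Bool) j (!((u : Fin h → Bool) j)), hdeg j⟩ with hn
  have hσex : ∀ j, ∃ s, α (n j) s ≠ α u s ∧ ∀ t, t ≠ s → α (n j) t = α u t := by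
    intro j
    have h1 : hammingDist (α (n j)) (α u) = 1 := by
      rw [hα]
      show hammingDist
        (Function.update (u : Fin h → Bool) j (!((u : Fin h → Bool) j))) (u : Fin h → Bool) = 1
      rw [hammingDist_comm]
      exact DaisyAux.ham_update_self (by simp)
    exact DaisyAux.hamming_one h1
  choose σ hσ1 hσ2 using hσex
  have keyfact : ∀ (j : Fin h) (a : daisyVerts X),
      (α a (σ j) ≠ α u (σ j)) ↔ ((a : Fin h → Bool) j ≠ (u : Fin h → Bool) j) :=
    fun j a => DaisyAux.key α hα u (n j) j (σ j) rfl (hσ1 j) (hσ2 j) a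
  have σinj : Function.Injective σ := by
    intro j j' hjj'
    by_contra hne
    have h1 : ((n j : Fin h → Bool)) j ≠ (u : Fin h → Bool) j := by
      show Function.update (u : Fin h → Bool) j (!((u : Fin h → Bool) j)) j
        ≠ (u : Fin h → Bool) j
      simp
    have h2 : ((n j : Fin h → Bool)) j' = (u : Fin h → Bool) j' := by
      show Function.update (u : Fin h → Bool) j (!((u : Fin h → Bool) j)) j'
        = (u : Fin h → Bool) j'
      exact Function.update_of_ne (fun hcc : j' = j => hne hcc.symm) _ _
    have k1 := (keyfact j (n j)).mpr h1
    have k2 : ¬ (α (n j) (σ j') ≠ α u (σ j')) := (keyfact j' (n j)).not.mpr (by simpa using h2)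
    rw [← hjj'] at k2
    exact k2 k1
  -- main claim
  have main : ∀ x ∈ maxSet X, (u : Fin h → Bool) ≤ x → (v : Fin h → Bool) ≤ x := by
    intro x hxmax hux
    rw [Pi.le_def]
    intro i
    by_contra hcon
    have hvx : (v : Fin h → Bool) i = true ∧ x i = false := by
      revert hcon
      cases (v : Fin h → Bool) i <;> cases x i <;> simp
    have hui : (u : Fin h → Bool) i = false := by
      have := hux i
      rw [hvx.2] at this
      exact le_bot_iff.mp this
    set xV : daisyVerts X := ⟨x, x, hxmax.1, le_refl x⟩ with hxV
    have hxVc : (xV : Fin h → Bool) = x := rfl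
    have h1 : α v (σ i) ≠ α u (σ i) := (keyfact i v).mpr (by rw [hvx.1, hui]; simp)
    have hαvs : α v (σ i) = false := by rw [hv0]; rfl
    have hαus : α u (σ i) = true := by
      revert h1
      rw [hαvs]
      cases α u (σ i) <;> simp
    have h2 : α xV (σ i) = α u (σ i) := by
      by_contra hne
      exact ((keyfact i xV).mp hne) (by rw [hxVc, hvx.2, hui])
    obtain ⟨b, hb⟩ := hclosed xV (σ i)
    have hbi : (b : Fin h → Bool) i = true := by
      have h3 : α b (σ i) ≠ α u (σ i) := by
        rw [hb, Function.update_self, hαus]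
        simp
      have h4 := (keyfact i b).mp h3
      rw [hui] at h4
      revert h4
      cases (b : Fin h → Bool) i <;> simp
    have hbj : ∀ j, j ≠ i → (b : Fin h → Bool) j = x j := by
      intro j hj
      have hσne : σ j ≠ σ i := fun hcc => hj (σinj hcc)
      have e1 : α b (σ j) = α xV (σ j) := by rw [hb, Function.update_of_ne hσne]
      have e2 := keyfact j b
      have e3 := keyfact j xV
      rw [e1] at e2
      have e4 : ((b : Fin h → Bool) j ≠ (u : Fin h → Bool) j)
          ↔ (x j ≠ (u : Fin h → Bool) j) := by
        rw [← hxVc]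
        exact e2.symm.trans e3
      revert e4
      cases (b : Fin h → Bool) j <;> cases x j <;> cases (u : Fin h → Bool) j <;> simp
    obtain ⟨y, hy, hby⟩ := b.2
    have hxb : x ≤ (b : Fin h → Bool) := by
      intro j
      by_cases hj : j = i
      · subst hj
        rw [hbi]
        exact le_top
      · rw [hbj j hj]
    have hxy : x = y := hxmax.2 y hy (le_trans hxb hby)
    have h5 := hby i
    rw [hbi, ← hxy, hvx.2] at h5
    exact absurd h5 (by simp)
  refine ⟨?_, main⟩
  intro x hx hux
  have hvx := main (x : Fin h → Bool) hx hux
  show (daisyGraph X).dist z v + (daisyGraph X).dist v x = (daisyGraph X).dist z x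
  rw [DaisyAux.daisy_dist, DaisyAux.daisy_dist, DaisyAux.daisy_dist, hz]
  exact DaisyAux.ham_add_of_le hvx
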